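/- Let q be a prime power with q ≥ 7 and let H be a short covering of 𝔽_q³ with |H| ≤ ⌈(q+1)/2⌉. Then (1) H contains a vector all of whose three coordinates are nonzero, and (2) for each coordinate index j ∈ {1,2,3} there exists a vector h ∈ H whose j-th coordinate is zero. -/

import Mathlib

/-! Both parts are double counts over the extended balls of `H`. If every `h ∈ H` had a zero
coordinate `i₀`, then off `i₀` the points of `Ẽ(h)` are multiples of `h`, so `Ẽ(h)` is
parametrised by `v i₁ ≠ 0` and the ratio `v i₀ / v i₁ ∉ {0, 1, h i₂ / h i₁}`; hence
`|Ẽ(h)| ≤ (q-1)(q-3)`, and covering `D_q`, of size `(q-1)(q-2)(q-3)`, needs `|H| ≥ q - 2`.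
If no `h ∈ H` vanished at `j`, a vector vanishing exactly at `j` lies in `E(h)` only if it is
`λh` with `λ ≠ 0` and its `j`-th coordinate overwritten by `0`; covering the `(q-1)²` such
vectors needs `|H| ≥ q - 1`. For `q ≥ 7` both bounds exceed `(q + 2) / 2`. -/

open Set Pointwise

variable {F : Type*} [Field F]

/-- Hamming distance on `𝔽_q³`. -/
noncomputable def hdist (u v : Fin 3 → F) : ℕ := Set.ncard {i : Fin 3 | u i ≠ v i}

/-- The ball of radius 1 centered at `u`. -/
def ball (u : Fin 3 → F) : Set (Fin 3 → F) := {v | hdist u v ≤ 1}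

/-- The extended ball of `u`: the union of the balls centered at scalar multiples of `u`. -/
def extBall (u : Fin 3 → F) : Set (Fin 3 → F) := ⋃ l : F, ball (l • u)

/-- `D_q`: vectors with pairwise distinct, nonzero coordinates. -/
def Dq : Set (Fin 3 → F) :=
  {u | u 0 ≠ u 1 ∧ u 0 ≠ u 2 ∧ u 1 ≠ u 2 ∧ u 0 ≠ 0 ∧ u 1 ≠ 0 ∧ u 2 ≠ 0}

/-- `B̃(u) = B(u) ∩ D_q`. -/
def ballD (u : Fin 3 → F) : Set (Fin 3 → F) := ball u ∩ Dq

/-- `Ẽ(u) = E(u) ∩ D_q`. -/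
def extBallD (u : Fin 3 → F) : Set (Fin 3 → F) := extBall u ∩ Dq

/-- `H` is a short covering if the extended balls centered at its elements cover the space. -/
def ShortCovering (H : Set (Fin 3 → F)) : Prop := (⋃ h ∈ H, extBall h) = Set.univ

theorem Set.ncard_le_ncard_mul_of_subset_biUnion {ι α : Type*} {t : Set ι} (ht : t.Finite)
    {s : ι → Set α} {S : Set α} {m : ℕ} (hS : S ⊆ ⋃ i ∈ t, s i)
    (hm : ∀ i ∈ t, (s i ∩ S).ncard ≤ m) : S.ncard ≤ t.ncard * m := by
  have hSeq : S = ⋃ i ∈ ht.toFinset, (s i ∩ S) := by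
    simp only [Set.Finite.mem_toFinset, ← Set.iUnion₂_inter, Set.inter_eq_right.mpr hS]
  calc S.ncard = (⋃ i ∈ ht.toFinset, (s i ∩ S)).ncard := congrArg _ hSeq
    _ ≤ ∑ i ∈ ht.toFinset, (s i ∩ S).ncard := Finset.set_ncard_biUnion_le _ _
    _ ≤ ht.toFinset.card * m :=
      Finset.sum_le_card_nsmul _ _ _ fun i hi => hm i (ht.mem_toFinset.mp hi)
    _ = t.ncard * m := by rw [Set.ncard_eq_toFinset_card t ht]

theorem mem_extBall_iff {u v : Fin 3 → F} : v ∈ extBall u ↔ ∃ l : F, hdist (l • u) v ≤ 1 := by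
  simp [extBall, ball]

theorem apply_eq_of_hdist_le_one {α : Type*} {u v : Fin 3 → α} (huv : hdist u v ≤ 1)
    {i j : Fin 3} (hi : u i ≠ v i) (hji : j ≠ i) : u j = v j := by
  by_contra hj
  exact hji ((Set.ncard_le_one (Set.toFinite _)).mp huv j hj i hi)

theorem mem_Dq_iff {v : Fin 3 → F} : v ∈ Dq ↔ Function.Injective v ∧ ∀ i, v i ≠ 0 := by
  constructor
  · rintro ⟨h01, h02, h12, h0, h1, h2⟩
    refine ⟨fun a b hab => ?_, fun i => ?_⟩
    · fin_cases a <;> fin_cases b <;> simp_all [eq_comm]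
    · fin_cases i <;> assumption
  · rintro ⟨hinj, hne⟩
    exact ⟨hinj.ne (by decide), hinj.ne (by decide), hinj.ne (by decide), hne 0, hne 1, hne 2⟩

theorem exists_smul_eq_of_mem_extBallD {h v : Fin 3 → F} {i₀ : Fin 3} (hz : h i₀ = 0)
    (hv : v ∈ extBallD h) : ∃ l : F, ∀ j ≠ i₀, v j = l * h j := by
  obtain ⟨l, hl⟩ := mem_extBall_iff.mp hv.1
  have hi₀ : (l • h) i₀ ≠ v i₀ := by
    simpa [hz] using ((mem_Dq_iff.mp hv.2).2 i₀).symm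
  exact ⟨l, fun j hj => (apply_eq_of_hdist_le_one hl hi₀ hj).symm⟩

theorem div_eq_div_of_mem_extBallD {h v : Fin 3 → F} {i₀ j k : Fin 3} (hz : h i₀ = 0)
    (hv : v ∈ extBallD h) (hj : j ≠ i₀) (hk : k ≠ i₀) : v j / v k = h j / h k := by
  obtain ⟨l, hl⟩ := exists_smul_eq_of_mem_extBallD hz hv
  have hvk : v k ≠ 0 := (mem_Dq_iff.mp hv.2).2 k
  rw [hl k hk] at hvk
  rw [hl j hj, hl k hk]
  exact mul_div_mul_left _ _ (left_ne_zero_of_mul hvk)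

section Counting

variable [Fintype F]

theorem ncard_extBallD_le {h : Fin 3 → F} {i₀ : Fin 3} (hz : h i₀ = 0) :
    (extBallD h).ncard ≤ (Fintype.card F - 1) * (Fintype.card F - 3) := by
  obtain ⟨i₁, i₂, h₁, h₂, h₁₂⟩ :=
    (by decide : ∀ i₀ : Fin 3, ∃ i₁ i₂ : Fin 3, i₁ ≠ i₀ ∧ i₂ ≠ i₀ ∧ i₁ ≠ i₂) i₀
  obtain hE | ⟨w, hw⟩ := (extBallD h).eq_empty_or_nonempty
  · simp [hE]
  set c := h i₂ / h i₁
  have hwD := mem_Dq_iff.mp hw.2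
  have hc : c = w i₂ / w i₁ := (div_eq_div_of_mem_extBallD hz hw h₂ h₁).symm
  have hc₀ : c ≠ 0 := hc ▸ div_ne_zero (hwD.2 i₂) (hwD.2 i₁)
  have hc₁ : c ≠ 1 := hc ▸ fun e => hwD.1.ne h₁₂.symm ((div_eq_one_iff_eq (hwD.2 i₁)).mp e)
  have hsub : extBallD h ⊆ (fun p : F × F => p.1 • ((h i₁)⁻¹ • h + Pi.single i₀ p.2)) ''
      (({0}ᶜ : Set F) ×ˢ ({0, 1, c}ᶜ : Set F)) := by
    intro v hv
    have hvD := mem_Dq_iff.mp hv.2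
    refine ⟨(v i₁, v i₀ / v i₁), ⟨hvD.2 i₁, ?_⟩, funext fun j => ?_⟩
    · simp only [Set.mem_compl_iff, Set.mem_insert_iff, Set.mem_singleton_iff, not_or]
      refine ⟨div_ne_zero (hvD.2 i₀) (hvD.2 i₁),
        fun e => hvD.1.ne h₁.symm ((div_eq_one_iff_eq (hvD.2 i₁)).mp e), fun e => ?_⟩
      rw [show c = v i₂ / v i₁ from (div_eq_div_of_mem_extBallD hz hv h₂ h₁).symm,
        div_left_inj' (hvD.2 i₁)] at e
      exact hvD.1.ne h₂.symm e
    · obtain rfl | hj := eq_or_ne j i₀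
      · simp [hz, mul_div_cancel₀ _ (hvD.2 i₁)]
      · have hvj := (div_eq_iff (hvD.2 i₁)).mp (div_eq_div_of_mem_extBallD hz hv hj h₁)
        simp only [Pi.smul_apply, Pi.add_apply, smul_eq_mul, Pi.single_eq_of_ne hj, add_zero, hvj]
        ring
  have h₀₁c : ({0, 1, c} : Set F).ncard = 3 :=
    Set.ncard_eq_three.mpr ⟨0, 1, c, zero_ne_one, hc₀.symm, hc₁.symm, rfl⟩
  calc (extBallD h).ncard ≤ (({0}ᶜ : Set F) ×ˢ ({0, 1, c}ᶜ : Set F)).ncard :=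
        (Set.ncard_le_ncard hsub (Set.toFinite _)).trans (Set.ncard_image_le (Set.toFinite _))
    _ = (Fintype.card F - 1) * (Fintype.card F - 3) := by
      rw [Set.ncard_prod, Set.ncard_compl, Set.ncard_compl, Set.ncard_singleton, h₀₁c,
        Nat.card_eq_fintype_card]

theorem descFactorial_le_ncard_Dq :
    (Fintype.card F - 1).descFactorial 3 ≤ (Dq : Set (Fin 3 → F)).ncard := by
  classical
  calc (Fintype.card F - 1).descFactorial 3 = Nat.card (Fin 3 ↪ Fˣ) := by
        rw [Nat.card_eq_fintype_card, Fintype.card_embedding_eq, Fintype.card_units,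
          Fintype.card_fin]
    _ ≤ Nat.card (Dq : Set (Fin 3 → F)) := ?_
    _ = (Dq : Set (Fin 3 → F)).ncard := Nat.card_coe_set_eq _
  refine Nat.card_le_card_of_injective (fun e => ⟨fun i => e i, mem_Dq_iff.mpr
    ⟨Units.val_injective.comp e.injective, fun i => (e i).ne_zero⟩⟩) fun e e' hee => ?_
  ext i
  exact congrFun (congrArg Subtype.val hee) i

def zeroExactlyAt (j : Fin 3) : Set (Fin 3 → F) := {v | ∀ k, v k = 0 ↔ k = j}

theorem sq_le_ncard_zeroExactlyAt (j : Fin 3) :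
    (Fintype.card F - 1) ^ 2 ≤ (zeroExactlyAt j : Set (Fin 3 → F)).ncard := by
  classical
  calc (Fintype.card F - 1) ^ 2 = Nat.card ({k // k ≠ j} → Fˣ) := by
        simp [Nat.card_eq_fintype_card, Fintype.card_units, Fintype.card_subtype_compl]
    _ ≤ Nat.card (zeroExactlyAt j : Set (Fin 3 → F)) := ?_
    _ = (zeroExactlyAt j : Set (Fin 3 → F)).ncard := Nat.card_coe_set_eq _
  refine Nat.card_le_card_of_injective
    (fun g => ⟨fun k => if hk : k = j then 0 else g ⟨k, hk⟩, fun k => ?_⟩) fun g g' hgg => ?_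
  · by_cases hk : k = j <;> simp [hk]
  · funext ⟨k, hk⟩
    exact Units.ext (by simpa [hk] using congrFun (congrArg Subtype.val hgg) k)

theorem ncard_extBall_inter_zeroExactlyAt_le {h : Fin 3 → F} {j : Fin 3} (hj : h j ≠ 0) :
    (extBall h ∩ zeroExactlyAt j).ncard ≤ Fintype.card F - 1 := by
  obtain ⟨j₁, j₂, h₁, h₂, h₁₂⟩ :=
    (by decide : ∀ j : Fin 3, ∃ j₁ j₂ : Fin 3, j₁ ≠ j ∧ j₂ ≠ j ∧ j₁ ≠ j₂) j
  have hsub : extBall h ∩ zeroExactlyAt j ⊆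
      Set.range fun l : Fˣ => Function.update ((l : F) • h) j 0 := by
    rintro v ⟨hvE, hv⟩
    obtain ⟨l, hl⟩ := mem_extBall_iff.mp hvE
    have hl₀ : l ≠ 0 := by
      rintro rfl
      have hv₁ : ((0 : F) • h) j₁ ≠ v j₁ := by simpa [eq_comm, hv j₁] using h₁
      have hv₂ := apply_eq_of_hdist_le_one hl hv₁ h₁₂.symm
      exact h₂ ((hv j₂).mp (by simpa [eq_comm] using hv₂))
    have hlj : (l • h) j ≠ v j := by simpa [(hv j).mpr rfl] using mul_ne_zero hl₀ hj
    refine ⟨Units.mk0 l hl₀, funext fun k => ?_⟩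
    obtain rfl | hk := eq_or_ne k j
    · simp [(hv k).mpr rfl]
    · simp [hk, apply_eq_of_hdist_le_one hl hlj hk]
  calc (extBall h ∩ zeroExactlyAt j).ncard
      ≤ (Set.range fun l : Fˣ => Function.update ((l : F) • h) j 0).ncard :=
        Set.ncard_le_ncard hsub (Set.toFinite _)
    _ ≤ Nat.card Fˣ := by
      rw [← Set.image_univ, ← Set.ncard_univ]; exact Set.ncard_image_le (Set.toFinite _)
    _ = Fintype.card F - 1 := by rw [Nat.card_units, Nat.card_eq_fintype_card]

end Counting

theorem stmt_15_general (q : ℕ) (hq7 : 7 ≤ q) (F : Type*) [Field F] [Fintype F]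
    (hcard : Fintype.card F = q) (H : Set (Fin 3 → F))
    (hH : ShortCovering H) (hHcard : H.ncard ≤ (q + 2) / 2) :
    (∃ h ∈ H, ∀ i : Fin 3, h i ≠ 0) ∧
    (∀ j : Fin 3, ∃ h ∈ H, h j = 0) := by
  have hcover (S : Set (Fin 3 → F)) : S ⊆ ⋃ h ∈ H, extBall h := hH ▸ Set.subset_univ S
  constructor
  · by_contra! hzero
    have hcount := (descFactorial_le_ncard_Dq (F := F)).trans
      (Set.ncard_le_ncard_mul_of_subset_biUnion H.toFinite (hcover Dq)
        fun h hh => (hzero h hh).elim fun _ => ncard_extBallD_le)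
    have hprod : (q - 1).descFactorial 3 = (q - 1) * (q - 3) * (q - 2) := by
      rw [Nat.descFactorial_succ, Nat.descFactorial_succ, Nat.descFactorial_one,
        show q - 1 - 2 = q - 3 by omega, show q - 1 - 1 = q - 2 by omega]
      ring
    rw [hcard, hprod, mul_comm H.ncard] at hcount
    have hH₂ : q - 2 ≤ H.ncard :=
      Nat.le_of_mul_le_mul_left hcount (Nat.mul_pos (by omega) (by omega))
    omega
  · intro j
    by_contra! hne
    have hcount := (sq_le_ncard_zeroExactlyAt (F := F) j).trans
      (Set.ncard_le_ncard_mul_of_subset_biUnion H.toFinite (hcover _)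
        fun h hh => ncard_extBall_inter_zeroExactlyAt_le (hne h hh))
    rw [hcard, sq] at hcount
    have hH₁ : q - 1 ≤ H.ncard := Nat.le_of_mul_le_mul_right hcount (by omega)
    omega

theorem stmt_15 (q : ℕ) (hq : IsPrimePow q) (hq7 : 7 ≤ q) (F : Type*) [Field F] [Fintype F]
    (hcard : Fintype.card F = q) (H : Set (Fin 3 → F))
    (hH : ShortCovering H) (hHcard : H.ncard ≤ (q + 2) / 2) :
    (∃ h ∈ H, ∀ i : Fin 3, h i ≠ 0) ∧
    (∀ j : Fin 3, ∃ h ∈ H, h j = 0) :=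
  stmt_15_general q hq7 F hcard H hH hHcard
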